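/- arXiv:math-ph/9907017 — 2 statements merged into one kernel-verified Lean document; each statement's English description precedes it below -/
import Mathlib

section
/- Let C_∞(σ, x) for x ∈ ℝ², σ real with |σ| small, be defined by C_∞(σ,x) = (2π)⁻² ∫_{ℝ²} dp · e^{ipx}/p² · [(e^{p⁴}+σ)⁻¹ − (e^{L⁴p⁴}+σ)⁻¹]. Then C_∞(σ, 0) = (log L)/(2π(1+σ)). -/
open MeasureTheory Set Real Filter Topology

/-!
In polar coordinates the integral becomes the Frullani integral
`∫₀^∞ (g r - g (L r)) dr / r` of the decreasing function `g r = (e^{r⁴} + σ)⁻¹`, whose value is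
`(g 0 - g ∞) log L = log L / (1 + σ)`. Because `g` decreases, the integrand is nonnegative, so the
convergence of the truncated integrals `∫_ε^T` already gives integrability on `(0, ∞)`.
-/

theorem EuclideanSpace.integral_fun_norm_fin_two {F : Type*} [NormedAddCommGroup F]
    [NormedSpace ℝ F] (f : ℝ → F) :
    ∫ p : EuclideanSpace ℝ (Fin 2), f ‖p‖ = (2 * π) • ∫ r in Ioi 0, r • f r := by
  rw [integral_fun_norm_addHaar, finrank_euclideanSpace_fin, measureReal_def,
    EuclideanSpace.volume_ball_fin_two, ← Nat.cast_smul_eq_nsmul ℝ, smul_smul]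
  simp [pi_nonneg]

namespace Frullani

theorem integral_Ioi_eq_of_nonneg {f : ℝ → ℝ} {a b L R : ℝ}
    (hf : LocallyIntegrableOn f (Ioi 0)) (ha : 0 < a) (hb : 0 < b)
    (hL : Tendsto f (𝓝[>] 0) (𝓝 L)) (hR : Tendsto f atTop (𝓝 R))
    (hnonneg : ∀ x ∈ Ioi (0 : ℝ), 0 ≤ x⁻¹ * (f (a * x) - f (b * x))) :
    ∫ x in Ioi 0, x⁻¹ * (f (a * x) - f (b * x)) = log (b / a) * (L - R) := by
  set u : ℕ → ℝ := fun n => ((n : ℝ) + 1)⁻¹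
  set v : ℕ → ℝ := fun n => (n : ℝ) + 1
  have hu_pos (n : ℕ) : 0 < u n := by positivity
  have hv_pos (n : ℕ) : 0 < v n := by positivity
  have hv : Tendsto v atTop atTop := tendsto_natCast_atTop_atTop.atTop_add tendsto_const_nhds
  have hu : Tendsto u atTop (𝓝[>] 0) :=
    tendsto_nhdsWithin_iff.2 ⟨tendsto_inv_atTop_zero.comp hv, .of_forall hu_pos⟩
  have hcover : AECover (volume.restrict (Ioi 0)) atTop fun n => Ioc (u n) (v n) :=
    (aecover_Ioi_of_Ioi (tendsto_nhdsWithin_iff.1 hu).1).inter (aecover_Iic hv)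
  have hrestrict (n : ℕ) : (volume.restrict (Ioi 0)).restrict (Ioc (u n) (v n)) =
      volume.restrict (Ioc (u n) (v n)) := by
    rw [Measure.restrict_restrict measurableSet_Ioc,
      inter_eq_left.2 (Ioc_subset_Ioi_self.trans (Ioi_subset_Ioi (hu_pos n).le))]
  have hint (n : ℕ) :
      IntervalIntegrable (fun x => x⁻¹ * (f (a * x) - f (b * x))) volume (u n) (v n) := by
    simp_rw [mul_sub]
    exact (intervalIntegrable_inv_smul_comp_mul hf (hu_pos n) (hv_pos n) ha).sub
      (intervalIntegrable_inv_smul_comp_mul hf (hu_pos n) (hv_pos n) hb)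
  refine hcover.integral_eq_of_tendsto_of_nonneg_ae _
    (ae_restrict_of_forall_mem measurableSet_Ioi hnonneg) (fun n => ?_) ?_
  · rw [IntegrableOn, hrestrict]
    exact (hint n).1
  · have huv (n : ℕ) : u n ≤ v n := (inv_le_one_of_one_le₀ (by simp)).trans (by simp [v])
    simp_rw [hrestrict, ← intervalIntegral.integral_of_le (huv _)]
    simpa only [smul_eq_mul, Function.comp_def] using
      (tendsto_intervalIntegral hf ha hb hL hR).comp (hu.prodMk hv)

end Frullani

noncomputable def cutoff (σ r : ℝ) : ℝ := (exp (r ^ 4) + σ)⁻¹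

section cutoff

variable {σ : ℝ}

theorem exp_pow_four_add_pos (hσ : -1 < σ) (r : ℝ) : 0 < exp (r ^ 4) + σ := by
  linarith [one_le_exp (by positivity : 0 ≤ r ^ 4)]

theorem continuous_cutoff (hσ : -1 < σ) : Continuous (cutoff σ) :=
  (by fun_prop : Continuous fun r : ℝ => exp (r ^ 4) + σ).inv₀ fun r =>
    (exp_pow_four_add_pos hσ r).ne'

theorem antitoneOn_cutoff (hσ : -1 < σ) : AntitoneOn (cutoff σ) (Ici 0) := by
  intro r hr s _ hrs
  unfold cutoff
  gcongr
  exact exp_pow_four_add_pos hσ r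

theorem tendsto_cutoff_atTop : Tendsto (cutoff σ) atTop (𝓝 0) :=
  (tendsto_atTop_add_const_right _ σ
    (tendsto_exp_atTop.comp (tendsto_pow_atTop four_ne_zero))).inv_tendsto_atTop

theorem tendsto_cutoff_nhdsGT_zero (hσ : -1 < σ) :
    Tendsto (cutoff σ) (𝓝[>] 0) (𝓝 (1 + σ)⁻¹) := by
  have := (continuous_cutoff hσ).continuousWithinAt (s := Ioi 0) (x := 0)
  simpa [cutoff, ContinuousWithinAt, add_comm] using this

end cutoff

theorem integral_Ioi_cutoff_frullani {σ L : ℝ} (hσ : -1 < σ) (hL : 1 ≤ L) :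
    ∫ r in Ioi 0, r⁻¹ * (cutoff σ r - cutoff σ (L * r)) = log L / (1 + σ) := by
  have h := Frullani.integral_Ioi_eq_of_nonneg (a := 1) (b := L)
    ((continuous_cutoff hσ).locallyIntegrable.locallyIntegrableOn _) one_pos (by linarith)
    (tendsto_cutoff_nhdsGT_zero hσ) tendsto_cutoff_atTop fun r (hr : 0 < r) =>
      mul_nonneg (inv_nonneg.2 hr.le) (sub_nonneg.2 (antitoneOn_cutoff hσ
        (by simp [hr.le]) (by simp; positivity) (by nlinarith)))
  simpa [div_eq_mul_inv] using h

/-- the value at `x = 0` of the two-dimensional slice covariance: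
`C_∞(σ,0) = (2π)⁻² ∫_{ℝ²} dp p⁻² [(e^{p⁴}+σ)⁻¹ − (e^{L⁴p⁴}+σ)⁻¹] = log L/(2π(1+σ))`. -/
theorem stmt4 (L σ : ℝ) (hL : 1 < L) (hσ : |σ| < 1) :
    (2 * Real.pi)⁻¹ ^ 2 *
      ∫ p : EuclideanSpace ℝ (Fin 2),
        (‖p‖ ^ 2)⁻¹ *
          ((Real.exp (‖p‖ ^ 4) + σ)⁻¹ - (Real.exp (L ^ 4 * ‖p‖ ^ 4) + σ)⁻¹)
      = Real.log L / (2 * Real.pi * (1 + σ)) := by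
  have hσ_gt : -1 < σ := (abs_lt.1 hσ).1
  have hradial : ∫ r in Ioi 0, r * ((r ^ 2)⁻¹ * (cutoff σ r - cutoff σ (L * r)))
      = log L / (1 + σ) := by
    rw [← integral_Ioi_cutoff_frullani hσ_gt hL.le]
    refine setIntegral_congr_fun measurableSet_Ioi fun r _ => ?_
    field_simp
  have hpolar := EuclideanSpace.integral_fun_norm_fin_two
    fun r => (r ^ 2)⁻¹ * (cutoff σ r - cutoff σ (L * r))
  simp only [cutoff, mul_pow, smul_eq_mul] at hpolar hradial
  rw [hpolar, hradial]
  have : 0 < 1 + σ := by linarith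
  field_simp
end

section
/- Let V(φ) = ∫_Δ cos(φ(x)) dx on a unit cube Δ. For any 0 < ε < 1, any h ≥ 1, and all complex ζ with |ζ| sufficiently small (depending on h, ε), one has ∑_{n≥0} (h^n/n!) sup_φ ‖(e^{ζV} − 1)_n(φ)‖ ≤ |ζ|^{1−ε} and ∑_{n≥0} (h^n/n!) sup_φ ‖(e^{ζV} − ζV − 1)_n(φ)‖ ≤ |ζ|^{2−ε}. -/
/-!
Writing `F = exp (ζ V)`, one has `DF = ζ F • DV`, so by Leibniz's rule the numbers
`aₙ = ‖DⁿF(φ)‖` satisfy `aₙ₊₁ ≤ |ζ| ∑ᵢ C(n,i) aᵢ` as soon as every derivative of `V` has norm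
at most `1`. This recursion keeps `aₙ (2h)ⁿ ≤ e·n!` as long as `|ζ|·2h·e^{2h} ≤ 1`, and one more
step of it gains a factor `|ζ|` for `exp (ζ V) - 1` and a factor `|ζ|²` for
`exp (ζ V) - ζ V - 1`, whose derivatives are `ζ F • DV` and `ζ (F - 1) • DV`. Summing against
`hⁿ/n!` then gives a geometric series. For `V φ = ∫ cos ∘ φ`, the bound on the derivatives of
`V` comes from the fact that the derivative of `φ ↦ cos ∘ (φ + c)` is multiplication by
`cos ∘ (φ + c + π/2)`.
-/

open MeasureTheory
open scoped ContDiff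

section Recursion

open Finset
open scoped Nat

variable {z r A : ℝ}

lemma choose_mul_factorial_mul_pow (n i : ℕ) (hi : i ≤ n) :
    (n.choose i : ℝ) * i ! * r ^ (n - i) = n ! * (r ^ (n - i) / (n - i)!) := by
  have h := congrArg (Nat.cast : ℕ → ℝ) (Nat.choose_mul_factorial_mul_factorial hi)
  push_cast at h
  rw [← h]
  field_simp

lemma sum_choose_mul_factorial_mul_pow_le (hr : 0 ≤ r) (n : ℕ) :
    ∑ i ∈ range (n + 1), (n.choose i : ℝ) * i ! * r ^ (n - i) ≤ n ! * Real.exp r := by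
  rw [sum_congr rfl fun i hi => choose_mul_factorial_mul_pow n i (by grind), ← mul_sum]
  gcongr
  calc ∑ i ∈ range (n + 1), r ^ (n - i) / (n - i)! = ∑ j ∈ range (n + 1), r ^ j / j ! := by
        simpa using sum_range_reflect (fun j => r ^ j / j !) (n + 1)
    _ ≤ Real.exp r := Real.sum_le_exp_of_nonneg hr _

lemma mul_pow_succ_le_of_le_choose_sum {b : ℝ} {c : ℕ → ℝ} {n : ℕ} (hz : 0 ≤ z) (hr : 0 ≤ r)
    (hA : 0 ≤ A) (hc : ∀ i ≤ n, c i * r ^ i ≤ A * i !)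
    (hb : b ≤ z * ∑ i ∈ range (n + 1), (n.choose i : ℝ) * c i) :
    b * r ^ (n + 1) ≤ z * r * Real.exp r * A * n ! := by
  have hterm : ∀ i ∈ range (n + 1), (n.choose i : ℝ) * c i * r ^ (n + 1)
      ≤ A * r * ((n.choose i : ℝ) * i ! * r ^ (n - i)) := by
    intro i hi
    have hi : i ≤ n := by grind
    calc (n.choose i : ℝ) * c i * r ^ (n + 1)
        = (n.choose i : ℝ) * r ^ (n - i) * r * (c i * r ^ i) := by
          rw [show n + 1 = (n - i) + 1 + i by omega, pow_add, pow_succ]; ring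
      _ ≤ (n.choose i : ℝ) * r ^ (n - i) * r * (A * i !) :=
          mul_le_mul_of_nonneg_left (hc i hi) (by positivity)
      _ = A * r * ((n.choose i : ℝ) * i ! * r ^ (n - i)) := by ring
  calc b * r ^ (n + 1) ≤ z * ∑ i ∈ range (n + 1), (n.choose i : ℝ) * c i * r ^ (n + 1) := by
        rw [← sum_mul, ← mul_assoc]; gcongr
    _ ≤ z * (A * r * (n ! * Real.exp r)) := by
        gcongr
        refine (sum_le_sum hterm).trans ?_
        rw [← mul_sum]
        gcongr
        exact sum_choose_mul_factorial_mul_pow_le hr n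
    _ = z * r * Real.exp r * A * n ! := by ring

lemma mul_pow_le_of_succ_le_choose_sum {b c : ℕ → ℝ} (hz : 0 ≤ z) (hr : 0 ≤ r) (hA : 0 ≤ A)
    (hc : ∀ i, c i * r ^ i ≤ A * i !) (h0 : b 0 ≤ z * r * Real.exp r * A)
    (hrec : ∀ n, b (n + 1) ≤ z * ∑ i ∈ range (n + 1), (n.choose i : ℝ) * c i) (n : ℕ) :
    b n * r ^ n ≤ z * r * Real.exp r * A * n ! := by
  cases n with
  | zero => simpa using h0
  | succ n =>
    calc b (n + 1) * r ^ (n + 1) ≤ z * r * Real.exp r * A * n ! :=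
          mul_pow_succ_le_of_le_choose_sum hz hr hA (fun i _ => hc i) (hrec n)
      _ ≤ z * r * Real.exp r * A * (n + 1)! := by gcongr; omega

lemma mul_pow_le_of_le_choose_sum {a : ℕ → ℝ} (hz : 0 ≤ z) (hr : 0 ≤ r) (hA : 0 ≤ A)
    (hq : z * r * Real.exp r ≤ 1) (h0 : a 0 ≤ A)
    (hrec : ∀ n, a (n + 1) ≤ z * ∑ i ∈ range (n + 1), (n.choose i : ℝ) * a i) (n : ℕ) :
    a n * r ^ n ≤ A * n ! := by
  induction n using Nat.strong_induction_on with
  | _ n ih =>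
    cases n with
    | zero => simpa using h0
    | succ n =>
      calc a (n + 1) * r ^ (n + 1) ≤ z * r * Real.exp r * A * n ! :=
            mul_pow_succ_le_of_le_choose_sum hz hr hA (fun i hi => ih i (by omega)) (hrec n)
        _ ≤ 1 * A * (n + 1)! := by gcongr; omega
        _ = A * (n + 1)! := by rw [one_mul]

lemma tsum_pow_div_factorial_mul_iSup_le {ι : Type*} {h K : ℝ} {f : ℕ → ι → ℝ} (hh : 0 < h)
    (hK : 0 ≤ K) (hf0 : ∀ n i, 0 ≤ f n i) (hf : ∀ n i, f n i * (2 * h) ^ n ≤ K * n !) :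
    ∑' n, h ^ n / n ! * ⨆ i, f n i ≤ 2 * K := by
  have hterm : ∀ n, h ^ n / n ! * ⨆ i, f n i ≤ K * (1 / 2) ^ n := by
    intro n
    have hsup : ⨆ i, f n i ≤ K * n ! / (2 * h) ^ n :=
      Real.iSup_le (fun i => (le_div_iff₀ (by positivity)).2 (hf n i)) (by positivity)
    calc h ^ n / n ! * ⨆ i, f n i ≤ h ^ n / n ! * (K * n ! / (2 * h) ^ n) := by gcongr
      _ = K * (1 / 2) ^ n := by rw [mul_pow, one_div_pow]; field_simp
  have hgeom : Summable fun n : ℕ => K * (1 / 2 : ℝ) ^ n := summable_geometric_two.mul_left K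
  have hnonneg : ∀ n, 0 ≤ h ^ n / n ! * ⨆ i, f n i := fun n =>
    mul_nonneg (by positivity) (Real.iSup_nonneg (hf0 n))
  calc ∑' n, h ^ n / n ! * ⨆ i, f n i ≤ ∑' n : ℕ, K * (1 / 2 : ℝ) ^ n :=
        (hgeom.of_nonneg_of_le hnonneg hterm).tsum_le_tsum hterm hgeom
    _ = 2 * K := by rw [tsum_mul_left, tsum_geometric_two, mul_comm]

end Recursion

lemma mul_rpow_le_rpow_sub {M ε k x : ℝ} (hM : 0 < M) (hε : 0 < ε) (hk : 0 < k) (hx : 0 ≤ x)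
    (hxδ : x ≤ M⁻¹ ^ (1 / ε)) : M * x ^ k ≤ x ^ (k - ε) := by
  have hxε : x ^ ε ≤ M⁻¹ := by
    calc x ^ ε ≤ (M⁻¹ ^ (1 / ε)) ^ ε := by gcongr
      _ = M⁻¹ := by rw [← Real.rpow_mul (by positivity), one_div_mul_cancel hε.ne', Real.rpow_one]
  calc M * x ^ k = M * x ^ ε * x ^ (k - ε) := by
        rw [mul_assoc, ← Real.rpow_add' hx (by linarith), add_sub_cancel]
    _ ≤ M * M⁻¹ * x ^ (k - ε) := by gcongr
    _ = x ^ (k - ε) := by rw [mul_inv_cancel₀ hM.ne', one_mul]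

section Exponential

open Finset
open scoped Nat

variable {E : Type*} [NormedAddCommGroup E] [NormedSpace ℝ E] {V : E → ℂ}

lemma norm_iteratedFDeriv_succ_le_of_fderiv_eq_smul {G H : E → ℂ} (ζ : ℂ)
    (hV : ContDiff ℝ ∞ V) (hVb : ∀ n x, ‖iteratedFDeriv ℝ n V x‖ ≤ 1) (hH : ContDiff ℝ ∞ H)
    (hG : fderiv ℝ G = fun x => (ζ * H x) • fderiv ℝ V x) (n : ℕ) (x : E) :
    ‖iteratedFDeriv ℝ (n + 1) G x‖ ≤
      ‖ζ‖ * ∑ i ∈ range (n + 1), (n.choose i : ℝ) * ‖iteratedFDeriv ℝ i H x‖ := by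
  rw [← norm_iteratedFDeriv_fderiv, hG, mul_sum]
  refine (norm_iteratedFDeriv_smul_le (hH.const_smul ζ) (hV.fderiv_right le_rfl) x
    (n := n) (mod_cast le_top)).trans (sum_le_sum fun i _ => ?_)
  rw [iteratedFDeriv_const_smul_apply' (hH.of_le (mod_cast le_top)).contDiffAt, norm_smul,
    norm_iteratedFDeriv_fderiv]
  calc (n.choose i : ℝ) * (‖ζ‖ * ‖iteratedFDeriv ℝ i H x‖) * ‖iteratedFDeriv ℝ (n - i + 1) V x‖
      ≤ (n.choose i : ℝ) * (‖ζ‖ * ‖iteratedFDeriv ℝ i H x‖) * 1 := by gcongr; exact hVb _ x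
    _ = ‖ζ‖ * ((n.choose i : ℝ) * ‖iteratedFDeriv ℝ i H x‖) := by ring

lemma fderiv_cexp_mul (ζ : ℂ) (hV : Differentiable ℝ V) :
    fderiv ℝ (fun x => Complex.exp (ζ * V x)) =
      fun x => (ζ * Complex.exp (ζ * V x)) • fderiv ℝ V x := by
  ext1 x
  rw [(((hV x).hasFDerivAt.const_mul ζ).cexp).fderiv, smul_smul, mul_comm]

lemma fderiv_cexp_mul_sub_one (ζ : ℂ) (hV : Differentiable ℝ V) :
    fderiv ℝ (fun x => Complex.exp (ζ * V x) - 1) =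
      fun x => (ζ * Complex.exp (ζ * V x)) • fderiv ℝ V x := by
  ext1 x
  rw [fderiv_sub_const, fderiv_cexp_mul ζ hV]

lemma fderiv_cexp_mul_sub_mul_sub_one (ζ : ℂ) (hV : Differentiable ℝ V) :
    fderiv ℝ (fun x => Complex.exp (ζ * V x) - ζ * V x - 1) =
      fun x => (ζ * (Complex.exp (ζ * V x) - 1)) • fderiv ℝ V x := by
  ext1 x
  have hF := (((hV x).hasFDerivAt.const_mul ζ).cexp).fun_sub ((hV x).hasFDerivAt.const_mul ζ)
  rw [fderiv_sub_const, hF.fderiv, smul_smul, ← sub_smul]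
  congr 1
  ring

variable {h : ℝ} {ζ : ℂ}

lemma norm_mul_apply_le (hVb : ∀ n x, ‖iteratedFDeriv ℝ n V x‖ ≤ 1) (ζ : ℂ) (x : E) :
    ‖ζ * V x‖ ≤ ‖ζ‖ :=
  (norm_mul_le_of_le le_rfl (by simpa using hVb 0 x)).trans_eq (mul_one _)

lemma le_mul_two_mul_exp (hh : 1 ≤ h) {a : ℝ} (ha : 0 ≤ a) :
    a ≤ a * (2 * h) * Real.exp (2 * h) := by
  calc a = a * (1 * 1) := by ring
    _ ≤ a * (2 * h * Real.exp (2 * h)) := by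
        gcongr
        · linarith
        · exact Real.one_le_exp (by linarith)
    _ = a * (2 * h) * Real.exp (2 * h) := by ring

lemma norm_le_one_of_mul_two_mul_exp_le_one (hh : 1 ≤ h)
    (hζ : ‖ζ‖ * (2 * h) * Real.exp (2 * h) ≤ 1) : ‖ζ‖ ≤ 1 :=
  (le_mul_two_mul_exp hh (norm_nonneg ζ)).trans hζ

lemma norm_iteratedFDeriv_cexp_mul_mul_pow_le (hV : ContDiff ℝ ∞ V)
    (hVb : ∀ n x, ‖iteratedFDeriv ℝ n V x‖ ≤ 1) (hh : 1 ≤ h)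
    (hζ : ‖ζ‖ * (2 * h) * Real.exp (2 * h) ≤ 1) (n : ℕ) (x : E) :
    ‖iteratedFDeriv ℝ n (fun x => Complex.exp (ζ * V x)) x‖ * (2 * h) ^ n ≤ Real.exp 1 * n ! := by
  refine mul_pow_le_of_le_choose_sum
    (a := fun n => ‖iteratedFDeriv ℝ n (fun x => Complex.exp (ζ * V x)) x‖)
    (norm_nonneg ζ) (by positivity) (Real.exp_pos 1).le hζ ?_
    (norm_iteratedFDeriv_succ_le_of_fderiv_eq_smul ζ hV hVb (contDiff_const.mul hV).cexp
      (fderiv_cexp_mul ζ (hV.differentiable (by simp))) · x) n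
  rw [norm_iteratedFDeriv_zero]
  exact (Complex.norm_exp_le_exp_norm _).trans <| Real.exp_le_exp.2 <|
    (norm_mul_apply_le hVb ζ x).trans (norm_le_one_of_mul_two_mul_exp_le_one hh hζ)

lemma norm_iteratedFDeriv_cexp_mul_sub_one_mul_pow_le (hV : ContDiff ℝ ∞ V)
    (hVb : ∀ n x, ‖iteratedFDeriv ℝ n V x‖ ≤ 1) (hh : 1 ≤ h)
    (hζ : ‖ζ‖ * (2 * h) * Real.exp (2 * h) ≤ 1) (n : ℕ) (x : E) :
    ‖iteratedFDeriv ℝ n (fun x => Complex.exp (ζ * V x) - 1) x‖ * (2 * h) ^ n ≤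
      ‖ζ‖ * (2 * h) * Real.exp (2 * h) * Real.exp 1 * n ! := by
  refine mul_pow_le_of_succ_le_choose_sum
    (b := fun n => ‖iteratedFDeriv ℝ n (fun x => Complex.exp (ζ * V x) - 1) x‖)
    (norm_nonneg ζ) (by positivity) (Real.exp_pos 1).le
    (norm_iteratedFDeriv_cexp_mul_mul_pow_le hV hVb hh hζ · x) ?_
    (norm_iteratedFDeriv_succ_le_of_fderiv_eq_smul ζ hV hVb (contDiff_const.mul hV).cexp
      (fderiv_cexp_mul_sub_one ζ (hV.differentiable (by simp))) · x) n
  have hζ1 := norm_le_one_of_mul_two_mul_exp_le_one hh hζ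
  have h2 : 2 ≤ 2 * h * Real.exp (2 * h) * Real.exp 1 := by
    calc (2 : ℝ) = 2 * 1 * 1 * 1 := by ring
      _ ≤ 2 * h * Real.exp (2 * h) * Real.exp 1 := by
        gcongr <;> exact Real.one_le_exp (by linarith)
  rw [norm_iteratedFDeriv_zero]
  calc ‖Complex.exp (ζ * V x) - 1‖ ≤ 2 * ‖ζ * V x‖ :=
        Complex.norm_exp_sub_one_le ((norm_mul_apply_le hVb ζ x).trans hζ1)
    _ ≤ 2 * ‖ζ‖ := by gcongr; exact norm_mul_apply_le hVb ζ x
    _ ≤ 2 * h * Real.exp (2 * h) * Real.exp 1 * ‖ζ‖ := mul_le_mul_of_nonneg_right h2 (norm_nonneg ζ)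
    _ = _ := by ring

lemma norm_iteratedFDeriv_cexp_mul_sub_mul_sub_one_mul_pow_le (hV : ContDiff ℝ ∞ V)
    (hVb : ∀ n x, ‖iteratedFDeriv ℝ n V x‖ ≤ 1) (hh : 1 ≤ h)
    (hζ : ‖ζ‖ * (2 * h) * Real.exp (2 * h) ≤ 1) (n : ℕ) (x : E) :
    ‖iteratedFDeriv ℝ n (fun x => Complex.exp (ζ * V x) - ζ * V x - 1) x‖ * (2 * h) ^ n ≤
      ‖ζ‖ * (2 * h) * Real.exp (2 * h) *
        (‖ζ‖ * (2 * h) * Real.exp (2 * h) * Real.exp 1) * n ! := by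
  refine mul_pow_le_of_succ_le_choose_sum
    (b := fun n => ‖iteratedFDeriv ℝ n (fun x => Complex.exp (ζ * V x) - ζ * V x - 1) x‖)
    (norm_nonneg ζ) (by positivity) (by positivity)
    (norm_iteratedFDeriv_cexp_mul_sub_one_mul_pow_le hV hVb hh hζ · x) ?_
    (norm_iteratedFDeriv_succ_le_of_fderiv_eq_smul ζ hV hVb
      ((contDiff_const.mul hV).cexp.sub contDiff_const)
      (fderiv_cexp_mul_sub_mul_sub_one ζ (hV.differentiable (by simp))) · x) n
  have hq := le_mul_two_mul_exp hh (norm_nonneg ζ)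
  rw [norm_iteratedFDeriv_zero]
  calc ‖Complex.exp (ζ * V x) - ζ * V x - 1‖ = ‖Complex.exp (ζ * V x) - 1 - ζ * V x‖ := by
        rw [sub_right_comm]
    _ ≤ ‖ζ * V x‖ ^ 2 := Complex.norm_exp_sub_one_sub_id_le
        ((norm_mul_apply_le hVb ζ x).trans (norm_le_one_of_mul_two_mul_exp_le_one hh hζ))
    _ ≤ ‖ζ‖ * (‖ζ‖ * 1) := by rw [sq, mul_one]; gcongr <;> exact norm_mul_apply_le hVb ζ x
    _ ≤ _ := by gcongr ?_ * (?_ * ?_); exact Real.one_le_exp zero_le_one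

theorem tsum_norm_iteratedFDeriv_cexp_mul_sub_one_le (hV : ContDiff ℝ ∞ V)
    (hVb : ∀ n x, ‖iteratedFDeriv ℝ n V x‖ ≤ 1) (hh : 1 ≤ h)
    (hζ : ‖ζ‖ * (2 * h) * Real.exp (2 * h) ≤ 1) :
    ∑' n, h ^ n / n ! * ⨆ x, ‖iteratedFDeriv ℝ n (fun x => Complex.exp (ζ * V x) - 1) x‖ ≤
      2 * Real.exp 1 * (2 * h * Real.exp (2 * h)) ^ 2 * ‖ζ‖ := by
  have hc : 1 ≤ 2 * h * Real.exp (2 * h) := by simpa using le_mul_two_mul_exp hh zero_le_one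
  calc _ ≤ 2 * (‖ζ‖ * (2 * h) * Real.exp (2 * h) * Real.exp 1) :=
        tsum_pow_div_factorial_mul_iSup_le (by linarith) (by positivity) (fun _ _ => norm_nonneg _)
          (norm_iteratedFDeriv_cexp_mul_sub_one_mul_pow_le hV hVb hh hζ)
    _ = 2 * Real.exp 1 * (2 * h * Real.exp (2 * h)) * ‖ζ‖ * 1 := by ring
    _ ≤ 2 * Real.exp 1 * (2 * h * Real.exp (2 * h)) * ‖ζ‖ * (2 * h * Real.exp (2 * h)) := by
        gcongr
    _ = 2 * Real.exp 1 * (2 * h * Real.exp (2 * h)) ^ 2 * ‖ζ‖ := by ring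

theorem tsum_norm_iteratedFDeriv_cexp_mul_sub_mul_sub_one_le (hV : ContDiff ℝ ∞ V)
    (hVb : ∀ n x, ‖iteratedFDeriv ℝ n V x‖ ≤ 1) (hh : 1 ≤ h)
    (hζ : ‖ζ‖ * (2 * h) * Real.exp (2 * h) ≤ 1) :
    ∑' n, h ^ n / n ! *
        ⨆ x, ‖iteratedFDeriv ℝ n (fun x => Complex.exp (ζ * V x) - ζ * V x - 1) x‖ ≤
      2 * Real.exp 1 * (2 * h * Real.exp (2 * h)) ^ 2 * ‖ζ‖ ^ 2 := by
  calc _ ≤ 2 * (‖ζ‖ * (2 * h) * Real.exp (2 * h) *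
          (‖ζ‖ * (2 * h) * Real.exp (2 * h) * Real.exp 1)) :=
        tsum_pow_div_factorial_mul_iSup_le (by linarith) (by positivity) (fun _ _ => norm_nonneg _)
          (norm_iteratedFDeriv_cexp_mul_sub_mul_sub_one_mul_pow_le hV hVb hh hζ)
    _ = _ := by ring

end Exponential

lemma abs_cos_add_sub_cos_add_mul_sin_le (u t : ℝ) :
    |Real.cos (u + t) - Real.cos u + t * Real.sin u| ≤ t ^ 2 := by
  let f : ℝ → ℝ := fun s => Real.cos (u + s) + s * Real.sin u
  have hf : ∀ s, HasDerivAt f (Real.sin u - Real.sin (u + s)) s := fun s => by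
    refine ((((hasDerivAt_id s).const_add u).cos).fun_add
      ((hasDerivAt_id s).mul_const (Real.sin u))).congr_deriv ?_
    simp only [id, mul_one, one_mul]
    ring
  have hbound : ∀ s ∈ Metric.closedBall (0 : ℝ) |t|, ‖Real.sin u - Real.sin (u + s)‖ ≤ |t| :=
    fun s hs => (Real.abs_sin_sub_sin_le u (u + s)).trans (by simpa using hs)
  have := (convex_closedBall (0 : ℝ) |t|).norm_image_sub_le_of_norm_hasDerivWithin_le
    (fun s _ => (hf s).hasDerivWithinAt) hbound (x := 0) (y := t) (by simp) (by simp)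
  rw [sub_add_eq_add_sub]
  simpa [f, sq, abs_mul_abs_self] using this

section CosIntegral

open BoundedContinuousFunction

variable {X : Type*} [TopologicalSpace X]

noncomputable def cosShiftComp (c : ℝ) (φ : X →ᵇ ℝ) : X →ᵇ ℝ :=
  (φ + const X c).comp Real.cos Real.lipschitzWith_cos

@[simp]
lemma cosShiftComp_apply (c : ℝ) (φ : X →ᵇ ℝ) (x : X) :
    cosShiftComp c φ x = Real.cos (φ x + c) := rfl

lemma norm_cosShiftComp_add_sub_sub_le (c : ℝ) (φ ψ : X →ᵇ ℝ) :
    ‖cosShiftComp c (φ + ψ) - cosShiftComp c φ - cosShiftComp (c + Real.pi / 2) φ * ψ‖ ≤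
      ‖ψ‖ ^ 2 := by
  refine (BoundedContinuousFunction.norm_le (by positivity)).2 fun x => ?_
  have hx := abs_cos_add_sub_cos_add_mul_sin_le (φ x + c) (ψ x)
  calc _ = |Real.cos (φ x + c + ψ x) - Real.cos (φ x + c) + ψ x * Real.sin (φ x + c)| := by
        simp only [coe_sub, coe_mul, coe_add, Pi.sub_apply, Pi.mul_apply, Pi.add_apply,
          cosShiftComp_apply, Real.norm_eq_abs, ← add_assoc, Real.cos_add_pi_div_two]
        ring_nf
    _ ≤ ψ x ^ 2 := hx
    _ ≤ ‖ψ‖ ^ 2 := by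
        rw [← sq_abs]
        gcongr
        exact ψ.norm_coe_le_norm x

lemma hasFDerivAt_cosShiftComp (c : ℝ) (φ : X →ᵇ ℝ) :
    HasFDerivAt (cosShiftComp c)
      (ContinuousLinearMap.mul ℝ (X →ᵇ ℝ) (cosShiftComp (c + Real.pi / 2) φ)) φ := by
  rw [hasFDerivAt_iff_isLittleO_nhds_zero]
  refine (Asymptotics.IsBigO.of_bound 1 (Filter.Eventually.of_forall fun ψ => ?_)).trans_isLittleO
    (Asymptotics.isLittleO_norm_pow_id one_lt_two)
  simpa using norm_cosShiftComp_add_sub_sub_le c φ ψ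

lemma fderiv_cosShiftComp (c : ℝ) :
    fderiv ℝ (cosShiftComp (X := X) c) =
      ContinuousLinearMap.mul ℝ (X →ᵇ ℝ) ∘ cosShiftComp (c + Real.pi / 2) :=
  funext fun φ => (hasFDerivAt_cosShiftComp c φ).fderiv

lemma contDiff_cosShiftComp (c : ℝ) : ContDiff ℝ ∞ (cosShiftComp (X := X) c) := by
  rw [contDiff_infty]
  intro n
  induction n generalizing c with
  | zero => exact contDiff_zero.2 <| continuous_iff_continuousAt.2 fun φ =>
    (hasFDerivAt_cosShiftComp c φ).continuousAt
  | succ n ih =>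
    rw [Nat.cast_succ, contDiff_succ_iff_fderiv, fderiv_cosShiftComp]
    exact ⟨fun φ => (hasFDerivAt_cosShiftComp c φ).differentiableAt, by simp,
      ContDiff.comp (ContinuousLinearMap.contDiff _) (ih _)⟩

lemma norm_iteratedFDeriv_cosShiftComp_le (n : ℕ) (c : ℝ) (φ : X →ᵇ ℝ) :
    ‖iteratedFDeriv ℝ n (cosShiftComp c) φ‖ ≤ 1 := by
  induction n generalizing c with
  | zero =>
    rw [norm_iteratedFDeriv_zero]
    exact (BoundedContinuousFunction.norm_le zero_le_one).2 fun x => Real.abs_cos_le_one _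
  | succ n ih =>
    rw [← norm_iteratedFDeriv_fderiv, fderiv_cosShiftComp]
    refine (ContinuousLinearMap.norm_iteratedFDeriv_comp_left _
      (contDiff_cosShiftComp _).contDiffAt (mod_cast le_top)).trans ?_
    exact mul_le_one₀ (ContinuousLinearMap.opNorm_mul_le ℝ _) (norm_nonneg _) (ih _)

variable [MeasurableSpace X] [OpensMeasurableSpace X] (μ : Measure X) [IsProbabilityMeasure μ]

noncomputable def complexIntegralCLM : (X →ᵇ ℝ) →L[ℝ] ℂ :=
  LinearMap.mkContinuous
    { toFun := fun φ => ((∫ x, φ x ∂μ : ℝ) : ℂ)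
      map_add' := fun φ ψ => by
        rw [coe_add, Pi.add_def, integral_add (φ.integrable μ) (ψ.integrable μ), Complex.ofReal_add]
      map_smul' := fun a φ => by
        rw [coe_smul, RingHom.id_apply, Complex.real_smul, ← Complex.ofReal_mul,
          ← integral_const_mul]
        rfl } 1
    fun φ => by simpa using φ.norm_integral_le_norm μ

lemma norm_complexIntegralCLM_le : ‖complexIntegralCLM μ (X := X)‖ ≤ 1 :=
  LinearMap.mkContinuous_norm_le _ zero_le_one _

lemma integral_cos_eq_complexIntegralCLM_comp :
    (fun φ : X →ᵇ ℝ => ((∫ x, Real.cos (φ x) ∂μ : ℝ) : ℂ)) =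
      complexIntegralCLM μ ∘ cosShiftComp 0 := by
  ext1 φ
  simp [complexIntegralCLM]

lemma contDiff_integral_cos :
    ContDiff ℝ ∞ (fun φ : X →ᵇ ℝ => ((∫ x, Real.cos (φ x) ∂μ : ℝ) : ℂ)) := by
  rw [integral_cos_eq_complexIntegralCLM_comp]
  exact (complexIntegralCLM μ).contDiff.comp (contDiff_cosShiftComp 0)

lemma norm_iteratedFDeriv_integral_cos_le (n : ℕ) (φ : X →ᵇ ℝ) :
    ‖iteratedFDeriv ℝ n (fun φ : X →ᵇ ℝ => ((∫ x, Real.cos (φ x) ∂μ : ℝ) : ℂ)) φ‖ ≤ 1 := by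
  rw [integral_cos_eq_complexIntegralCLM_comp]
  refine ((complexIntegralCLM μ).norm_iteratedFDeriv_comp_left
    (contDiff_cosShiftComp 0).contDiffAt (mod_cast le_top)).trans ?_
  exact mul_le_one₀ (norm_complexIntegralCLM_le μ) (norm_nonneg _)
    (norm_iteratedFDeriv_cosShiftComp_le n 0 φ)

end CosIntegral

theorem stmt10_general (d : ℕ) (ε h : ℝ) (hε : 0 < ε) (hh : 1 ≤ h) :
    let B := BoundedContinuousFunction (Fin d → ℝ) ℝ
    let V : B → ℂ := fun φ => ((∫ x in Set.Icc (0 : Fin d → ℝ) 1, Real.cos (φ x) : ℝ) : ℂ)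
    ∃ δ : ℝ, 0 < δ ∧ ∀ ζ : ℂ, ‖ζ‖ ≤ δ →
      (∑' n : ℕ, h ^ n / n.factorial *
          ⨆ φ : B, ‖iteratedFDeriv ℝ n (fun ψ => Complex.exp (ζ * V ψ) - 1) φ‖)
        ≤ ‖ζ‖ ^ (1 - ε) ∧
      (∑' n : ℕ, h ^ n / n.factorial *
          ⨆ φ : B, ‖iteratedFDeriv ℝ n (fun ψ => Complex.exp (ζ * V ψ) - ζ * V ψ - 1) φ‖)
        ≤ ‖ζ‖ ^ (2 - ε) := by
  intro B V
  let μ := volume.restrict (Set.Icc (0 : Fin d → ℝ) 1)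
  have : IsProbabilityMeasure μ := ⟨by simp [μ, Real.volume_Icc_pi]⟩
  have hV : ContDiff ℝ ∞ V := contDiff_integral_cos μ
  have hVb : ∀ n φ, ‖iteratedFDeriv ℝ n V φ‖ ≤ 1 := norm_iteratedFDeriv_integral_cos_le μ
  set c := 2 * h * Real.exp (2 * h)
  set M := 2 * Real.exp 1 * c ^ 2
  have hM : 0 < M := by positivity
  refine ⟨min c⁻¹ (M⁻¹ ^ (1 / ε)), by positivity, fun ζ hζ => ?_⟩
  have hq : ‖ζ‖ * (2 * h) * Real.exp (2 * h) ≤ 1 := by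
    calc ‖ζ‖ * (2 * h) * Real.exp (2 * h) = ‖ζ‖ * c := by ring
      _ ≤ c⁻¹ * c := by gcongr; exact hζ.trans (min_le_left _ _)
      _ = 1 := inv_mul_cancel₀ (by positivity)
  have hζδ : ‖ζ‖ ≤ M⁻¹ ^ (1 / ε) := hζ.trans (min_le_right _ _)
  refine ⟨(tsum_norm_iteratedFDeriv_cexp_mul_sub_one_le hV hVb hh hq).trans ?_,
    (tsum_norm_iteratedFDeriv_cexp_mul_sub_mul_sub_one_le hV hVb hh hq).trans ?_⟩
  · simpa using mul_rpow_le_rpow_sub hM hε one_pos (norm_nonneg ζ) hζδ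
  · simpa using mul_rpow_le_rpow_sub hM hε two_pos (norm_nonneg ζ) hζδ

/-- for `V(φ) = ∫_Δ cos(φ)`, `0 < ε < 1`, `h ≥ 1` and `|ζ|`
sufficiently small, `∑ₙ (hⁿ/n!) supᵩ ‖(e^{ζV}−1)_n(φ)‖ ≤ |ζ|^{1−ε}` and
`∑ₙ (hⁿ/n!) supᵩ ‖(e^{ζV}−ζV−1)_n(φ)‖ ≤ |ζ|^{2−ε}`. -/
theorem stmt10 (d : ℕ) (hd : 0 < d) (ε h : ℝ) (hε : 0 < ε) (hε1 : ε < 1) (hh : 1 ≤ h) :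
    let B := BoundedContinuousFunction (Fin d → ℝ) ℝ
    let V : B → ℂ := fun φ => ((∫ x in Set.Icc (0 : Fin d → ℝ) 1, Real.cos (φ x) : ℝ) : ℂ)
    ∃ δ : ℝ, 0 < δ ∧ ∀ ζ : ℂ, ‖ζ‖ ≤ δ →
      (∑' n : ℕ, h ^ n / n.factorial *
          ⨆ φ : B, ‖iteratedFDeriv ℝ n (fun ψ => Complex.exp (ζ * V ψ) - 1) φ‖)
        ≤ ‖ζ‖ ^ (1 - ε) ∧
      (∑' n : ℕ, h ^ n / n.factorial *
          ⨆ φ : B, ‖iteratedFDeriv ℝ n (fun ψ => Complex.exp (ζ * V ψ) - ζ * V ψ - 1) φ‖)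
        ≤ ‖ζ‖ ^ (2 - ε) :=
  stmt10_general d ε h hε hh
end
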